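/- arXiv:math/9811170 — 2 statements merged into one kernel-verified Lean document; each statement's English description precedes it below -/
import Mathlib

section
/- Suppose (P, ω) is an insertion-tolerant bond percolation process on a connected locally finite graph G, and let A ⊆ 2^V × 2^E be measurable. Assume that with positive probability there co-exist infinite clusters of type A and infinite clusters of type ¬A. Then with positive probability there is an infinite cluster of the percolation that has a pivotal edge. -/
open MeasureTheory

open scoped ENNReal

section Preamble

variable {V : Type*}

/-- The spanning percolation subgraph of `G` determined by the configuration
`ω ⊆ Sym2 V` of open edges. -/
def percGraph (G : SimpleGraph V) (ω : Set (Sym2 V)) : SimpleGraph V where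
  Adj x y := G.Adj x y ∧ s(x, y) ∈ ω
  symm := ⟨fun x y ⟨h, hm⟩ => ⟨h.symm, by rwa [Sym2.eq_swap]⟩⟩
  loopless := ⟨fun x ⟨h, _⟩ => G.loopless.irrefl x h⟩

/-- The cluster (vertex set of the connected component) of `v` in the
configuration `ω`. -/
def cluster (G : SimpleGraph V) (ω : Set (Sym2 V)) (v : V) : Set V :=
  {u | (percGraph G ω).Reachable v u}

/-- `g` is an automorphism of the graph `G`. -/
def IsGraphAut (G : SimpleGraph V) (g : Equiv.Perm V) : Prop :=
  ∀ x y, G.Adj (g x) (g y) ↔ G.Adj x y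

/-- The action of a permutation of the vertices on bond configurations. -/
def edgeAct (g : Equiv.Perm V) (ω : Set (Sym2 V)) : Set (Sym2 V) :=
  Sym2.map g '' ω

/-- The action of a permutation of the vertices on vertex sets. -/
def vertAct (g : Equiv.Perm V) (C : Set V) : Set V := (g : V → V) '' C

/-- `G` is locally finite. -/
def LocFin (G : SimpleGraph V) : Prop := ∀ v, (G.neighborSet v).Finite

/-- A set of permutations acts transitively on the vertices. -/
def TransSubgroup (Γ : Subgroup (Equiv.Perm V)) : Prop :=
  ∀ x y : V, ∃ γ ∈ Γ, γ x = y

/-- Unimodularity of a transitive closed automorphism group of a connected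
locally finite graph, via the standard counting characterization
`|{z : ∃ γ ∈ Γ, γx = x, γy = z}| = |{z : ∃ γ ∈ Γ, γy = y, γx = z}|`. -/
def UnimodSubgroup (Γ : Subgroup (Equiv.Perm V)) : Prop :=
  ∀ x y : V,
    {z | ∃ γ ∈ Γ, γ x = x ∧ γ y = z}.ncard = {z | ∃ γ ∈ Γ, γ y = y ∧ γ x = z}.ncard

/-- The topology of pointwise convergence on the permutations of the
(discrete) vertex set. -/
def permTop (V : Type*) : TopologicalSpace (Equiv.Perm V) :=
  letI : TopologicalSpace V := ⊥
  TopologicalSpace.induced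
    (fun g : Equiv.Perm V => ((g : V → V), (g.symm : V → V))) inferInstance

/-- `Γ` is closed in the topology of pointwise convergence. -/
def ClosedSubgroup' (Γ : Subgroup (Equiv.Perm V)) : Prop :=
  @IsClosed _ (permTop V) (Γ : Set (Equiv.Perm V))

/-- `P` is a `Γ`-invariant bond percolation process (a probability measure on
`2^E`, invariant under each element of `Γ`). -/
def InvariantPerc (Γ : Subgroup (Equiv.Perm V)) (P : Measure (Set (Sym2 V))) : Prop :=
  IsProbabilityMeasure P ∧ ∀ γ ∈ Γ, Measure.map (edgeAct γ) P = P

/-- `P` is `Γ`-ergodic: every `Γ`-invariant event has probability `0` or `1`. -/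
def ErgodicPerc (Γ : Subgroup (Equiv.Perm V)) (P : Measure (Set (Sym2 V))) : Prop :=
  ∀ A : Set (Set (Sym2 V)), MeasurableSet A → (∀ γ ∈ Γ, edgeAct γ ⁻¹' A = A) →
    P A = 0 ∨ P A = 1

/-- `P` is Bernoulli(`p`) bond percolation on `G`: the product measure on the
subsets of the edge set giving each edge probability `p` independently.  (These
conditions characterize that product measure uniquely.) -/
def IsBernoulli (G : SimpleGraph V) (p : ℝ) (P : Measure (Set (Sym2 V))) : Prop :=
  IsProbabilityMeasure P ∧ P {ω | ω ⊆ G.edgeSet} = 1 ∧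
    ∀ s : Finset (Sym2 V), ↑s ⊆ G.edgeSet →
      P {ω | ∀ e ∈ s, e ∈ ω} = ENNReal.ofReal p ^ s.card

/-- There is exactly one infinite cluster in the configuration `ω`. -/
def uniqueInfCluster (G : SimpleGraph V) (ω : Set (Sym2 V)) : Prop :=
  (∃ v, (cluster G ω v).Infinite) ∧
    ∀ u v, (cluster G ω u).Infinite → (cluster G ω v).Infinite →
      cluster G ω u = cluster G ω v

/-- Insertion tolerance of a bond percolation process. -/
def InsertionTolerant (G : SimpleGraph V) (P : Measure (Set (Sym2 V))) : Prop :=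
  ∀ e ∈ G.edgeSet, ∀ A : Set (Set (Sym2 V)), MeasurableSet A → 0 < P A →
    0 < P ((fun ω => insert e ω) '' A)

/-- Deletion tolerance of a bond percolation process. -/
def DeletionTolerant (G : SimpleGraph V) (P : Measure (Set (Sym2 V))) : Prop :=
  ∀ e ∈ G.edgeSet, ∀ A : Set (Set (Sym2 V)), MeasurableSet A → 0 < P A →
    0 < P ((fun ω => ω \ {e}) '' A)

/-- The uniqueness threshold `p_u` of a graph: the infimum of the `p ∈ [0,1]`
for which Bernoulli(`p`) bond percolation has a unique infinite cluster a.s. -/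
noncomputable def pu (G : SimpleGraph V) : ℝ :=
  sInf {p : ℝ | p ∈ Set.Icc (0 : ℝ) 1 ∧
    ∀ P : Measure (Set (Sym2 V)), IsBernoulli G p P →
      ∀ᵐ ω ∂P, uniqueInfCluster G ω}

/-- The (right) Cayley graph of a group with respect to a generating set `S`. -/
def cayleyGraph (Γ : Type*) [Group Γ] (S : Finset Γ) : SimpleGraph Γ :=
  SimpleGraph.fromRel (fun v w => ∃ s ∈ S, w = v * s)

end Preamble

/-- The edge `e` is pivotal for the (infinite) cluster of `v` in `ω`, relative
to the property `A`: `e` is a non-open edge of `G` such that the cluster of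
`ω ∪ {e}` containing the cluster of `v` has a type (∈ `A` or ∉ `A`) different
from the type of the cluster of `v` in `ω`. -/
def PivotalEdge {V : Type*} (G : SimpleGraph V) (A : Set (Set V × Set (Sym2 V)))
    (ω : Set (Sym2 V)) (v : V) (e : Sym2 V) : Prop :=
  e ∈ G.edgeSet ∧ e ∉ ω ∧
    ¬(((cluster G (insert e ω) v, insert e ω) ∈ A) ↔ ((cluster G ω v, ω) ∈ A))


/-!
Pick vertices `u`, `v` whose clusters are, with positive probability, infinite of types `A`
and `¬A` (there are countably many pairs since `G` is connected and locally finite), and a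
path in `G` from `u` to `v`. Opening its edges one at a time ends with `u` and `v` in one
cluster, so at some step the type of the cluster of `u` or of `v` changes; the edge opened
there is pivotal for the configuration with the earlier edges of the path added, in which
that cluster is still infinite. For some fixed step this happens with positive probability,
and insertion tolerance, applied to the finitely many earlier edges, carries positivity back
to the original process.
-/

section Sets

variable {α : Type*}

lemma measurable_insert_set (a : α) : Measurable fun s : Set α => insert a s :=
  measurable_set_iff.2 fun b => by simp only [Set.mem_insert_iff]; fun_prop

lemma measurable_diff_singleton_set (a : α) : Measurable fun s : Set α => s \ {a} :=
  measurable_set_iff.2 fun b => by simp only [Set.mem_sdiff, Set.mem_singleton_iff]; fun_prop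

lemma measurable_union_set (t : Set α) : Measurable fun s : Set α => s ∪ t :=
  measurable_set_iff.2 fun b => by simp only [Set.mem_union]; fun_prop

lemma image_insert_eq_inter (a : α) (D : Set (Set α)) :
    insert a '' D = {s | a ∈ s} ∩ (D ∪ (· \ {a}) ⁻¹' D) := by
  ext s
  constructor
  · rintro ⟨t, ht, rfl⟩
    refine ⟨Set.mem_insert a t, ?_⟩
    by_cases hat : a ∈ t
    · exact Or.inl (by rwa [Set.insert_eq_of_mem hat])
    · exact Or.inr (by rwa [Set.mem_preimage, Set.insert_sdiff_self_of_notMem hat])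
  · rintro ⟨has : a ∈ s, hs | hs⟩
    · exact ⟨s, hs, Set.insert_eq_of_mem has⟩
    · exact ⟨s \ {a}, hs, by rw [Set.insert_sdiff_singleton, Set.insert_eq_of_mem has]⟩

lemma MeasurableSet.image_insert (a : α) {D : Set (Set α)} (hD : MeasurableSet D) :
    MeasurableSet (insert a '' D) := by
  rw [image_insert_eq_inter]
  exact (measurableSet_mem a).inter (hD.union (measurable_diff_singleton_set a hD))

lemma image_union_insert (a : α) (t : Set α) (D : Set (Set α)) :
    (· ∪ insert a t) '' D = insert a '' ((· ∪ t) '' D) := by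
  simp only [Set.image_image, Set.union_insert]

lemma MeasurableSet.image_union_of_finite {t : Set α} (ht : t.Finite) {D : Set (Set α)}
    (hD : MeasurableSet D) : MeasurableSet ((· ∪ t) '' D) := by
  induction t, ht using Set.Finite.induction_on with
  | empty => simpa only [Set.union_empty, Set.image_id'] using hD
  | insert _ _ ih => rw [image_union_insert]; exact ih.image_insert _

lemma union_take_succ (s : Set α) (l : List α) {i : ℕ} (hi : i < l.length) :
    s ∪ {a | a ∈ l.take (i + 1)} = insert l[i] (s ∪ {a | a ∈ l.take i}) := by
  ext a
  simp only [Set.mem_union, Set.mem_ofPred_eq, Set.mem_insert_iff,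
    ← List.take_concat_get' l i hi, List.mem_append, List.mem_singleton]
  tauto

end Sets

lemma exists_lt_apply_succ_ne {β : Type*} (f : ℕ → β) {n : ℕ} (h : f 0 ≠ f n) :
    ∃ i < n, f (i + 1) ≠ f i := by
  induction n with
  | zero => exact absurd rfl h
  | succ n ih =>
    by_cases hn : f 0 = f n
    · exact ⟨n, n.lt_succ_self, fun h' => h (hn.trans h'.symm)⟩
    · obtain ⟨i, hi, hne⟩ := ih hn
      exact ⟨i, hi.trans n.lt_succ_self, hne⟩

section Percolation

variable {V : Type*} {G : SimpleGraph V}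

lemma LocFin.finite_setOf_walk_length_le (hlf : LocFin G) (n : ℕ) (v : V) :
    {u | ∃ p : G.Walk v u, p.length ≤ n}.Finite := by
  induction n generalizing v with
  | zero =>
    refine (Set.finite_singleton v).subset ?_
    rintro u ⟨p, hp⟩
    exact (SimpleGraph.Walk.eq_of_length_eq_zero (Nat.le_zero.1 hp)).symm
  | succ n ih =>
    refine (((hlf v).biUnion fun x _ => ih x).insert v).subset ?_
    rintro u ⟨_ | ⟨hvx, q⟩, hp⟩
    · exact Set.mem_insert _ _
    · exact Or.inr (Set.mem_biUnion hvx ⟨q, by simpa using hp⟩)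

lemma countable_of_connected_of_locFin (hconn : G.Connected) (hlf : LocFin G) :
    Countable V := by
  obtain ⟨v⟩ := hconn.nonempty
  refine Set.countable_univ_iff.1 ((Set.countable_iUnion fun n =>
    (hlf.finite_setOf_walk_length_le n v).countable).mono fun u _ => ?_)
  obtain ⟨p⟩ := hconn.preconnected v u
  exact Set.mem_iUnion.2 ⟨p.length, p, le_rfl⟩

lemma mem_percGraph_edgeSet {ω : Set (Sym2 V)} {e : Sym2 V} :
    e ∈ (percGraph G ω).edgeSet ↔ e ∈ G.edgeSet ∧ e ∈ ω := by
  induction e using Sym2.ind with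
  | _ x y => simp [SimpleGraph.mem_edgeSet, percGraph]

lemma mem_cluster_iff {ω : Set (Sym2 V)} {v u : V} :
    u ∈ cluster G ω v ↔ ∃ p : G.Walk v u, ∀ e ∈ p.edges, e ∈ ω := by
  constructor
  · rintro ⟨q⟩
    have hq : ∀ e ∈ q.edges, e ∈ G.edgeSet ∧ e ∈ ω := fun e he =>
      mem_percGraph_edgeSet.1 (q.edges_subset_edgeSet he)
    refine ⟨q.transfer G fun e he => (hq e he).1, fun e he => ?_⟩
    rw [SimpleGraph.Walk.edges_transfer] at he
    exact (hq e he).2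
  · rintro ⟨p, hp⟩
    exact ⟨p.transfer (percGraph G ω) fun e he =>
      mem_percGraph_edgeSet.2 ⟨p.edges_subset_edgeSet he, hp e he⟩⟩

lemma cluster_mono {ω ω' : Set (Sym2 V)} (h : ω ⊆ ω') (v : V) :
    cluster G ω v ⊆ cluster G ω' v :=
  fun _ hu =>
    hu.mono (show percGraph G ω ≤ percGraph G ω' from fun _ _ hxy => ⟨hxy.1, h hxy.2⟩)

lemma cluster_eq_of_mem {ω : Set (Sym2 V)} {u v : V} (h : u ∈ cluster G ω v) :
    cluster G ω v = cluster G ω u :=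
  Set.ext fun _ => ⟨fun hw => SimpleGraph.Reachable.trans (SimpleGraph.Reachable.symm h) hw,
    fun hw => SimpleGraph.Reachable.trans h hw⟩

variable (G) in
def pivotalEvent (A : Set (Set V × Set (Sym2 V))) : Set (Set (Sym2 V)) :=
  {ω | ∃ v, (cluster G ω v).Infinite ∧ ∃ e, PivotalEdge G A ω v e}

variable (G) in
def coexistEvent (A : Set (Set V × Set (Sym2 V))) (u v : V) : Set (Set (Sym2 V)) :=
  {ω | (cluster G ω u).Infinite ∧ (cluster G ω v).Infinite ∧
    (cluster G ω u, ω) ∈ A ∧ (cluster G ω v, ω) ∉ A}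

lemma mem_pivotalEvent_of_path {A : Set (Set V × Set (Sym2 V))} {ω : Set (Sym2 V)} {u v : V}
    (hu : (cluster G ω u).Infinite) (hv : (cluster G ω v).Infinite)
    (hAu : (cluster G ω u, ω) ∈ A) (hAv : (cluster G ω v, ω) ∉ A)
    {l : List (Sym2 V)} (hl : ∀ e ∈ l, e ∈ G.edgeSet)
    (hreach : v ∈ cluster G (ω ∪ {e | e ∈ l}) u) :
    ∃ i < l.length, ω ∪ {e | e ∈ l.take i} ∈ pivotalEvent G A := by
  set ω' : ℕ → Set (Sym2 V) := fun i => ω ∪ {e | e ∈ l.take i} with hω'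
  let types : ℕ → Prop × Prop := fun i =>
    ((cluster G (ω' i) u, ω' i) ∈ A, (cluster G (ω' i) v, ω' i) ∈ A)
  have h0 : ω' 0 = ω := by simp [hω']
  have hjoin : (types l.length).1 = (types l.length).2 := by
    simp only [types, hω', List.take_length, cluster_eq_of_mem hreach]
  obtain ⟨i, hi, hflip⟩ := exists_lt_apply_succ_ne types (n := l.length) fun h => by
    have h' : (types 0).1 = (types 0).2 := by rw [h]; exact hjoin
    simp only [types, h0] at h'
    exact hAv (h' ▸ hAu)
  have hsucc : ω' (i + 1) = insert l[i] (ω' i) := union_take_succ ω l hi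
  have hnew : l[i] ∉ ω' i := fun hmem => hflip (by
    simp only [types, hsucc, Set.insert_eq_of_mem hmem])
  obtain ⟨w, hw, hwflip⟩ : ∃ w, (cluster G ω w).Infinite ∧
      ((cluster G (ω' (i + 1)) w, ω' (i + 1)) ∈ A) ≠
        ((cluster G (ω' i) w, ω' i) ∈ A) := by
    by_cases hfst : (types (i + 1)).1 = (types i).1
    · exact ⟨v, hv, fun hsnd => hflip (Prod.ext hfst hsnd)⟩
    · exact ⟨u, hu, hfst⟩
  refine ⟨i, hi, w, hw.mono (cluster_mono Set.subset_union_left w), l[i],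
    hl _ (List.getElem_mem hi), hnew, fun hiff => hwflip ?_⟩
  rw [hsucc]
  exact propext hiff

lemma InsertionTolerant.measure_image_union_pos {P : Measure (Set (Sym2 V))}
    (hIT : InsertionTolerant G P) {S : Set (Sym2 V)} (hS : S.Finite) (hSG : S ⊆ G.edgeSet)
    {D : Set (Set (Sym2 V))} (hD : MeasurableSet D) (hpos : 0 < P D) :
    0 < P ((· ∪ S) '' D) := by
  induction S, hS using Set.Finite.induction_on with
  | empty => simpa only [Set.union_empty, Set.image_id'] using hpos
  | @insert a s _ hs ih =>
    rw [image_union_insert]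
    exact hIT a (hSG (Set.mem_insert a s)) _ (hD.image_union_of_finite hs)
      (ih ((Set.subset_insert a s).trans hSG))

lemma exists_coexistEvent_pos [Countable V] {P : Measure (Set (Sym2 V))}
    {A : Set (Set V × Set (Sym2 V))}
    (h : 0 < P {ω | ∃ u v, (cluster G ω u).Infinite ∧ (cluster G ω v).Infinite ∧
      (cluster G ω u, ω) ∈ A ∧ (cluster G ω v, ω) ∉ A}) :
    ∃ u v, 0 < P (coexistEvent G A u v) := by
  have hunion : P (⋃ uv : V × V, coexistEvent G A uv.1 uv.2) ≠ 0 := by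
    convert h.ne'
    ext ω
    simp [coexistEvent]
  obtain ⟨⟨u, v⟩, huv⟩ := exists_measure_pos_of_not_measure_iUnion_null hunion
  exact ⟨u, v, huv⟩

section Measurability

variable [Countable V]

lemma measurable_mem_cluster (v u : V) :
    Measurable fun ω : Set (Sym2 V) => u ∈ cluster G ω v := by
  have : Countable (G.Walk v u) := SimpleGraph.Walk.edges_injective.countable
  simp_rw [mem_cluster_iff]
  exact .exists fun p => .forall fun e => .imp measurable_const (measurable_set_mem e)

lemma measurable_cluster (v : V) : Measurable fun ω : Set (Sym2 V) => cluster G ω v :=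
  measurable_set_iff.2 fun u => measurable_mem_cluster v u

lemma measurable_infinite_cluster (v : V) :
    Measurable fun ω : Set (Sym2 V) => (cluster G ω v).Infinite :=
  (measurable_mem.2 MeasurableSet.setOfPred_infinite).comp (measurable_cluster v)

lemma measurable_cluster_mem {A : Set (Set V × Set (Sym2 V))} (hA : MeasurableSet A) (v : V) :
    Measurable fun ω : Set (Sym2 V) => (cluster G ω v, ω) ∈ A :=
  (measurable_mem.2 hA).comp ((measurable_cluster v).prodMk measurable_id)

lemma measurableSet_pivotalEvent {A : Set (Set V × Set (Sym2 V))} (hA : MeasurableSet A) :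
    MeasurableSet (pivotalEvent G A) :=
  measurableSet_setOfPred.2 <| .exists fun v => (measurable_infinite_cluster v).and <|
    .exists fun e => measurable_const.and <| (measurable_set_notMem e).and <|
      (((measurable_cluster_mem hA v).comp (measurable_insert_set e)).iff
        (measurable_cluster_mem hA v)).not

lemma measurableSet_coexistEvent {A : Set (Set V × Set (Sym2 V))} (hA : MeasurableSet A)
    (u v : V) : MeasurableSet (coexistEvent G A u v) :=
  measurableSet_setOfPred.2 <| (measurable_infinite_cluster u).and <|
    (measurable_infinite_cluster v).and <|
      (measurable_cluster_mem hA u).and (measurable_cluster_mem hA v).not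

end Measurability

end Percolation

theorem pivotals_lemma_general
    {V : Type*} (G : SimpleGraph V) (hconn : G.Connected) (hlf : LocFin G)
    (P : Measure (Set (Sym2 V)))
    (hIT : InsertionTolerant G P)
    (A : Set (Set V × Set (Sym2 V))) (hA : MeasurableSet A)
    (hcoex : 0 < P {ω | ∃ u v, (cluster G ω u).Infinite ∧ (cluster G ω v).Infinite ∧
      (cluster G ω u, ω) ∈ A ∧ (cluster G ω v, ω) ∉ A}) :
    0 < P {ω | ∃ v, (cluster G ω v).Infinite ∧ ∃ e, PivotalEdge G A ω v e} := by
  have : Countable V := countable_of_connected_of_locFin hconn hlf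
  obtain ⟨u, v, huv⟩ := exists_coexistEvent_pos hcoex
  obtain ⟨p⟩ := hconn.preconnected u v
  let opened : ℕ → Set (Sym2 V) := fun i => {e | e ∈ p.edges.take i}
  have hcover : coexistEvent G A u v ⊆
      ⋃ i, coexistEvent G A u v ∩ (· ∪ opened i) ⁻¹' pivotalEvent G A := by
    rintro ω hω
    obtain ⟨i, -, hi⟩ := mem_pivotalEvent_of_path hω.1 hω.2.1 hω.2.2.1 hω.2.2.2
      (fun e he => p.edges_subset_edgeSet he)
      (mem_cluster_iff.2 ⟨p, fun e he => Or.inr he⟩)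
    exact Set.mem_iUnion.2 ⟨i, hω, hi⟩
  obtain ⟨i, hi⟩ := exists_measure_pos_of_not_measure_iUnion_null
    (huv.trans_le (measure_mono hcover)).ne'
  refine (hIT.measure_image_union_pos (p.edges.take i).finite_toSet
    (fun e he => p.edges_subset_edgeSet (List.take_subset _ _ he))
    ((measurableSet_coexistEvent hA u v).inter
      (measurable_union_set _ (measurableSet_pivotalEvent hA))) hi).trans_le (measure_mono ?_)
  rintro _ ⟨ω, ⟨-, hω⟩, rfl⟩
  exact hω

/-- **Pivotals lemma.**  Suppose `(P, ω)` is an insertion-tolerant bond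
percolation process on a connected locally finite graph `G`, and let
`A ⊆ 2^V × 2^E` be measurable.  Assume that with positive probability there
co-exist infinite clusters in `A` and outside `A`.  Then with positive
probability there is an infinite cluster of the percolation that has a pivotal
edge. -/
theorem pivotals_lemma
    {V : Type*} (G : SimpleGraph V) (hconn : G.Connected) (hlf : LocFin G)
    (P : Measure (Set (Sym2 V))) (hprob : IsProbabilityMeasure P)
    (hIT : InsertionTolerant G P)
    (A : Set (Set V × Set (Sym2 V))) (hA : MeasurableSet A)
    (hcoex : 0 < P {ω | ∃ u v, (cluster G ω u).Infinite ∧ (cluster G ω v).Infinite ∧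
      (cluster G ω u, ω) ∈ A ∧ (cluster G ω v, ω) ∉ A}) :
    0 < P {ω | ∃ v, (cluster G ω v).Infinite ∧ ∃ e, PivotalEdge G A ω v e} :=
  pivotals_lemma_general G hconn hlf P hIT A hA hcoex
end

section
/- Let Γ be a transitive closed subgroup of the automorphism group of an infinite connected locally finite graph G. If (P, ω) is a Γ-invariant insertion-tolerant bond percolation process on G, then almost every ergodic component of P is insertion tolerant; equivalently, for every Γ-invariant event G₀ ⊆ 2^E with P[G₀] > 0, the conditional measure P[· | G₀] is insertion tolerant. -/
open MeasureTheory

open scoped ENNReal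

/-!
Approximate the `Γ`-invariant event `G₀` in measure by a cylinder event depending only on a finite
set `I` of edges. As `V` is infinite and `Γ` is transitive, some `γ ∈ Γ` moves the edge `e` outside
`I`; by invariance the translated cylinder approximates `G₀` equally well and is blind to `e`.
Insertion tolerance says that opening `e` pulls null sets back to null sets, so Borel–Cantelli along
such approximations shows that opening `e` a.s. does not change membership in `G₀`. Hence opening
`e` on `G₀ ∩ A` a.s. stays inside `G₀`, and insertion tolerance passes to `P[· | G₀]`.
-/

open MeasureTheory Set Filter
open scoped symmDiff

theorem exists_cylinder_measure_symmDiff_lt {ι : Type*} {α : ι → Type*}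
    [∀ i, MeasurableSpace (α i)] {μ : Measure (∀ i, α i)} [hμ : IsFiniteMeasure μ]
    {s : Set (∀ i, α i)} (hs : MeasurableSet s) {ε : ℝ≥0∞} (hε : 0 < ε) :
    ∃ (I : Finset ι) (S : Set (∀ i : I, α i)), MeasurableSet S ∧ μ (cylinder I S ∆ s) < ε := by
  obtain ⟨t, ht, hlt⟩ := exists_measure_symmDiff_lt_of_generateFrom_isSetRing (μ := μ)
    isSetRing_measurableCylinders
    ⟨{univ}, countable_singleton _, singleton_subset_iff.2 (univ_mem_measurableCylinders α),
      by simp⟩ generateFrom_measurableCylinders.symm hs hε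
  obtain ⟨I, S, hS, rfl⟩ := (mem_measurableCylinders t).1 ht
  exact ⟨I, S, hS, hlt⟩

theorem MeasureTheory.Measure.QuasiMeasurePreserving.preimage_ae_eq_of_forall_exists_invariant
    {α : Type*} [MeasurableSpace α] {μ : Measure α} {T : α → α}
    (hT : Measure.QuasiMeasurePreserving T μ μ) {A : Set α}
    (hA : ∀ ε > 0, ∃ C, T ⁻¹' C = C ∧ μ (C ∆ A) < ε) : T ⁻¹' A =ᵐ[μ] A := by
  choose C hCT hCA using fun n : ℕ => hA (2⁻¹ ^ n) (ENNReal.pow_pos (by simp) n)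
  have hsum : ∑' n, μ (C n ∆ A) ≠ ⊤ :=
    ne_top_of_le_ne_top (by simp [ENNReal.tsum_geometric, ENNReal.one_sub_inv_two])
      (ENNReal.tsum_le_tsum fun n => (hCA n).le)
  have hA_lim : ∀ᵐ x ∂μ, ∀ᶠ n in atTop, (x ∈ C n ↔ x ∈ A) := by
    filter_upwards [ae_eventually_notMem hsum] with x hx
    filter_upwards [hx] with n hn
    simp only [mem_symmDiff, not_or, not_and_not_right] at hn
    exact ⟨hn.1, hn.2⟩
  filter_upwards [hA_lim, hT.ae hA_lim] with x hx hTx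
  obtain ⟨n, hxn, hTxn⟩ := (hx.and hTx).exists
  have hCn : T x ∈ C n ↔ x ∈ C n := by rw [← mem_preimage, hCT n]
  exact propext (hTxn.symm.trans (hCn.trans hxn))

section Configurations

variable {α : Type*}

theorem measurable_insert (a : α) : Measurable (insert a : Set α → Set α) :=
  measurable_set_iff.2 fun b => by
    simp only [mem_insert_iff]
    exact measurable_const.or (measurable_set_mem b)

theorem preimage_insert_cylinder {a : α} {I : Finset α} (ha : a ∉ I) (S : Set (I → Prop)) :
    (insert a : Set α → Set α) ⁻¹' cylinder (α := fun _ => Prop) I S = cylinder I S := by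
  refine Set.ext fun s : Set α => ?_
  have hres : I.restrict (insert a s : Set α) = I.restrict s :=
    funext fun i => propext (or_iff_right (ne_of_mem_of_not_mem i.2 ha))
  change I.restrict (insert a s : Set α) ∈ S ↔ I.restrict s ∈ S
  rw [hres]

theorem exists_finset_preimage_insert_eq_measure_symmDiff_lt (μ : Measure (Set α))
    [IsFiniteMeasure μ] {A : Set (Set α)} (hA : MeasurableSet A) {ε : ℝ≥0∞} (hε : 0 < ε) :
    ∃ (I : Finset α) (C : Set (Set α)), MeasurableSet C ∧
      (∀ a ∉ I, insert a ⁻¹' C = C) ∧ μ (C ∆ A) < ε := by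
  -- the instance is passed by hand: `Set α` and `α → Prop` carry the same σ-algebra only up to
  -- unfolding `Set.instMeasurableSpace`
  obtain ⟨I, S, hS, hlt⟩ := exists_cylinder_measure_symmDiff_lt (hμ := ‹IsFiniteMeasure μ›) hA hε
  exact ⟨I, cylinder I S, hS.cylinder, fun a ha => preimage_insert_cylinder ha S, hlt⟩

end Configurations

section Percolation

variable {V : Type*} {G : SimpleGraph V} {Γ : Subgroup (Equiv.Perm V)}
  {P : Measure (Set (Sym2 V))}

theorem mem_edgeAct_iff (γ : Equiv.Perm V) (ω : Set (Sym2 V)) (f : Sym2 V) :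
    f ∈ edgeAct γ ω ↔ Sym2.map γ.symm f ∈ ω := by
  constructor
  · rintro ⟨g, hg, rfl⟩
    simpa [Sym2.map_map] using hg
  · exact fun h => ⟨_, h, by simp [Sym2.map_map]⟩

theorem measurable_edgeAct (γ : Equiv.Perm V) : Measurable (edgeAct γ) :=
  measurable_set_iff.2 fun f => by
    simp only [mem_edgeAct_iff]
    exact measurable_set_mem _

theorem TransSubgroup.exists_sym2Map_notMem [Infinite V] (htrans : TransSubgroup Γ)
    (e : Sym2 V) (I : Finset (Sym2 V)) : ∃ γ ∈ Γ, Sym2.map γ e ∉ I := by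
  classical
  obtain ⟨z, hz⟩ := Infinite.exists_notMem_finset (I.biUnion Sym2.toFinset)
  obtain ⟨γ, hγ, rfl⟩ := htrans e.out.1 z
  refine ⟨γ, hγ, fun hmem => hz (Finset.mem_biUnion.2 ⟨_, hmem, ?_⟩)⟩
  exact Sym2.mem_toFinset.2 (Sym2.mem_map.2 ⟨_, e.out_fst_mem, rfl⟩)

theorem InvariantPerc.measure_preimage_edgeAct (hP : InvariantPerc Γ P) {γ : Equiv.Perm V}
    (hγ : γ ∈ Γ) {A : Set (Set (Sym2 V))} (hA : MeasurableSet A) :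
    P (edgeAct γ ⁻¹' A) = P A := by
  rw [← Measure.map_apply (measurable_edgeAct γ) hA, hP.2 γ hγ]

theorem InvariantPerc.exists_preimage_insert_eq_measure_symmDiff_lt [Infinite V]
    (hP : InvariantPerc Γ P) (htrans : TransSubgroup Γ) {G₀ : Set (Set (Sym2 V))}
    (hG₀ : MeasurableSet G₀) (hinv : ∀ γ ∈ Γ, edgeAct γ ⁻¹' G₀ = G₀) (e : Sym2 V)
    {ε : ℝ≥0∞} (hε : 0 < ε) :
    ∃ C, (insert e : Set (Sym2 V) → Set (Sym2 V)) ⁻¹' C = C ∧ P (C ∆ G₀) < ε := by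
  have := hP.1
  obtain ⟨I, C, hC, hCI, hlt⟩ := exists_finset_preimage_insert_eq_measure_symmDiff_lt P hG₀ hε
  obtain ⟨γ, hγ, hγe⟩ := htrans.exists_sym2Map_notMem e I
  refine ⟨edgeAct γ ⁻¹' C, ?_, ?_⟩
  · have hcomm : edgeAct γ ∘ insert e = insert (Sym2.map γ e) ∘ edgeAct γ :=
      funext fun _ => image_insert_eq
    rw [← preimage_comp, hcomm, preimage_comp, hCI _ hγe]
  · rw [← hinv γ hγ, ← preimage_symmDiff, hP.measure_preimage_edgeAct hγ (hC.symmDiff hG₀)]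
    exact hlt

theorem InsertionTolerant.quasiMeasurePreserving_insert (hIT : InsertionTolerant G P)
    {e : Sym2 V} (he : e ∈ G.edgeSet) : Measure.QuasiMeasurePreserving (insert e) P P where
  measurable := measurable_insert e
  absolutelyContinuous := Measure.AbsolutelyContinuous.mk fun N hN hN0 => by
    rw [Measure.map_apply (measurable_insert e) hN]
    by_contra hne
    exact (hIT e he _ (measurable_insert e hN) (pos_iff_ne_zero.2 hne)).ne'
      (measure_mono_null (image_preimage_subset _ _) hN0)

theorem InvariantPerc.preimage_insert_ae_eq [Infinite V] (hP : InvariantPerc Γ P)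
    (htrans : TransSubgroup Γ) (hIT : InsertionTolerant G P) {G₀ : Set (Set (Sym2 V))}
    (hG₀ : MeasurableSet G₀) (hinv : ∀ γ ∈ Γ, edgeAct γ ⁻¹' G₀ = G₀) {e : Sym2 V}
    (he : e ∈ G.edgeSet) : insert e ⁻¹' G₀ =ᵐ[P] G₀ :=
  (hIT.quasiMeasurePreserving_insert he).preimage_ae_eq_of_forall_exists_invariant
    fun _ hε => hP.exists_preimage_insert_eq_measure_symmDiff_lt htrans hG₀ hinv e hε

theorem InsertionTolerant.cond [IsFiniteMeasure P] (hIT : InsertionTolerant G P)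
    {G₀ : Set (Set (Sym2 V))} (hG₀ : MeasurableSet G₀)
    (hG₀e : ∀ e ∈ G.edgeSet, insert e ⁻¹' G₀ =ᵐ[P] G₀) :
    InsertionTolerant G (ProbabilityTheory.cond P G₀) := by
  intro e he A hA hpos
  rw [ProbabilityTheory.cond_apply hG₀] at hpos ⊢
  set B : Set (Set (Sym2 V)) := G₀ ∩ A ∩ insert e ⁻¹' G₀
  have hPB : P B = P (G₀ ∩ A) := by
    rw [measure_congr (EventuallyEq.rfl.inter (hG₀e e he)), inter_right_comm, inter_self]
  have hB : MeasurableSet B := (hG₀.inter hA).inter (measurable_insert e hG₀)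
  have himage : insert e '' B ⊆ G₀ ∩ insert e '' A :=
    fun _ ⟨ω, ⟨⟨_, hωA⟩, hωe⟩, hω⟩ => hω ▸ ⟨hωe, ω, hωA, rfl⟩
  refine ENNReal.mul_pos (ENNReal.inv_ne_zero.2 (measure_ne_top P G₀)) (ne_of_gt ?_)
  calc 0 < P (insert e '' B) := hIT e he B hB (hPB ▸ (ENNReal.mul_pos_iff.1 hpos).2)
    _ ≤ P (G₀ ∩ insert e '' A) := measure_mono himage

end Percolation

theorem ergodic_components_insertion_tolerant_general
    {V : Type*} [Infinite V] (G : SimpleGraph V)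
    (Γ : Subgroup (Equiv.Perm V)) (htrans : TransSubgroup Γ)
    (P : Measure (Set (Sym2 V))) (hP : InvariantPerc Γ P)
    (hIT : InsertionTolerant G P) :
    ∀ G₀ : Set (Set (Sym2 V)), MeasurableSet G₀ →
      (∀ γ ∈ Γ, edgeAct γ ⁻¹' G₀ = G₀) → 0 < P G₀ →
      InsertionTolerant G (ProbabilityTheory.cond P G₀) := by
  intro G₀ hG₀ hinv _
  have := hP.1
  exact hIT.cond hG₀ fun e he => hP.preimage_insert_ae_eq htrans hIT hG₀ hinv he

/-- **Ergodic components of insertion-tolerant percolation are insertion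
tolerant.**  Let `Γ` be a transitive closed subgroup of the automorphism group
of an infinite connected locally finite graph `G`.  If `(P, ω)` is a
`Γ`-invariant insertion-tolerant bond percolation process on `G`, then for
every `Γ`-invariant event `G₀` with `P[G₀] > 0`, the conditional measure
`P[· | G₀]` is insertion tolerant (equivalently, almost every ergodic
component of `P` is insertion tolerant). -/
theorem ergodic_components_insertion_tolerant
    {V : Type*} [Infinite V] (G : SimpleGraph V) (hconn : G.Connected)
    (hlf : LocFin G)
    (Γ : Subgroup (Equiv.Perm V)) (haut : ∀ γ ∈ Γ, IsGraphAut G γ)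
    (hclosed : ClosedSubgroup' Γ) (htrans : TransSubgroup Γ)
    (P : Measure (Set (Sym2 V))) (hP : InvariantPerc Γ P)
    (hIT : InsertionTolerant G P) :
    ∀ G₀ : Set (Set (Sym2 V)), MeasurableSet G₀ →
      (∀ γ ∈ Γ, edgeAct γ ⁻¹' G₀ = G₀) → 0 < P G₀ →
      InsertionTolerant G (ProbabilityTheory.cond P G₀) :=
  ergodic_components_insertion_tolerant_general G Γ htrans P hP hIT
end
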